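/- arXiv:0705.2014 — 2 statements merged into one kernel-verified Lean document; each statement's English description precedes it below -/
import Mathlib

section
/- Let M be an associative algebra over a commutative ring K containing Q, let d be a derivation on M, and let X ∈ M. Then for every n ≥ 0, d(X^n) = Σ_{k=1}^{n} binom(n,k) (ad X)^{k-1}(dX) · X^{n-k}, where ad X: b ↦ [X,b] = Xb − bX. -/
open scoped BigOperators

private lemma pow_mul_eq_sum_ad {M : Type*} [Ring M] (X b : M) (n : ℕ) :
    X ^ n * b = ∑ j ∈ Finset.range (n + 1),
      (n.choose j) • ((fun c => X * c - c * X)^[j] b * X ^ (n - j)) := by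
  set f : M → M := fun c => X * c - c * X with hf
  induction n with
  | zero => simp
  | succ n ih =>
    have key : X ^ (n + 1) * b
        = ∑ j ∈ Finset.range (n + 1),
            ((n.choose j) • (f^[j + 1] b * X ^ (n - j))
              + (n.choose j) • (f^[j] b * X ^ (n + 1 - j))) := by
      rw [pow_succ', mul_assoc, ih, Finset.mul_sum]
      refine Finset.sum_congr rfl fun j hj => ?_
      have hjn : j ≤ n := Nat.lt_succ_iff.mp (Finset.mem_range.mp hj)
      have h1 : n + 1 - j = (n - j) + 1 := by omega
      rw [mul_smul_comm, ← smul_add]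
      congr 1
      have hx : X * (f^[j] b) = f^[j + 1] b + f^[j] b * X := by
        rw [Function.iterate_succ_apply', hf]; noncomm_ring
      rw [← mul_assoc, hx, add_mul, mul_assoc, h1, pow_succ']
    rw [key, Finset.sum_add_distrib]
    have hg : ∀ j ∈ Finset.range (n + 2),
        ((n + 1).choose j) • (f^[j] b * X ^ (n + 1 - j))
          = (n.choose j) • (f^[j] b * X ^ (n + 1 - j))
            + (if j = 0 then 0 else (n.choose (j - 1)) • (f^[j] b * X ^ (n + 1 - j))) := by
      intro j _
      rcases j with _ | j
      · simp
      · simp [Nat.choose_succ_succ, add_smul, add_comm]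
    rw [Finset.sum_congr rfl hg, Finset.sum_add_distrib, add_comm]
    congr 1
    · rw [Finset.sum_range_succ (n := n + 1), Nat.choose_succ_self]
      simp
    · rw [Finset.sum_range_succ' (n := n + 1)]
      simp only [if_pos rfl, add_zero, Nat.succ_sub_one, Nat.succ_ne_zero, if_false, ite_false,
        ite_true, if_true]
      refine Finset.sum_congr rfl fun j hj => ?_
      rw [show n + 1 - (j + 1) = n - j from by omega]

/-- Let `M` be an associative algebra over a commutative ring `K ⊇ ℚ` and let
`d` be a (`K`-linear) derivation on `M`.  Then for every `n ≥ 0` and `X ∈ M`,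
`d(Xⁿ) = Σ_{k=1}^{n} C(n,k) (ad X)^{k-1}(dX) · X^{n-k}`,
where `ad X : b ↦ Xb − bX`. -/
theorem derivation_pow_eq_sum_adjoint (K : Type*) [CommRing K] [Algebra ℚ K]
    (M : Type*) [Ring M] [Algebra K M]
    (d : M →ₗ[K] M) (hd : ∀ a b : M, d (a * b) = d a * b + a * d b)
    (X : M) (n : ℕ) :
    d (X ^ n)
      = ∑ k ∈ Finset.Icc 1 n,
          (n.choose k) • ((fun b => X * b - b * X)^[k - 1] (d X) * X ^ (n - k)) := by
  set f : M → M := fun c => X * c - c * X with hf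
  have hd1 : d 1 = 0 := by have := hd 1 1; simp at this; exact this
  have main : ∀ m : ℕ, d (X ^ m)
      = ∑ i ∈ Finset.range m, (m.choose (i + 1)) • (f^[i] (d X) * X ^ (m - (i + 1))) := by
    intro m
    induction m with
    | zero => simp [hd1]
    | succ m ih =>
      have step : d (X ^ (m + 1)) = d (X ^ m) * X + X ^ m * d X := by
        rw [pow_succ, hd]
      rw [step, ih, pow_mul_eq_sum_ad X (d X) m, Finset.sum_mul, ← hf]
      have h1 : ∑ i ∈ Finset.range m,
            (m.choose (i + 1)) • (f^[i] (d X) * X ^ (m - (i + 1))) * X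
          = ∑ i ∈ Finset.range m,
            (m.choose (i + 1)) • (f^[i] (d X) * X ^ (m - i)) := by
        refine Finset.sum_congr rfl fun i hi => ?_
        have him : i < m := Finset.mem_range.mp hi
        rw [smul_mul_assoc, mul_assoc, ← pow_succ]
        congr 3
        omega
      rw [h1]
      have h2 : ∀ i ∈ Finset.range (m + 1),
          ((m + 1).choose (i + 1)) • (f^[i] (d X) * X ^ (m + 1 - (i + 1)))
            = (m.choose (i + 1)) • (f^[i] (d X) * X ^ (m - i))
              + (m.choose i) • (f^[i] (d X) * X ^ (m - i)) := by
        intro i _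
        rw [Nat.choose_succ_succ', add_smul, show m + 1 - (i + 1) = m - i from by omega, add_comm]
      rw [Finset.sum_congr rfl h2, Finset.sum_add_distrib]
      congr 1
      rw [Finset.sum_range_succ, Nat.choose_succ_self]
      simp
  rw [main n]
  refine Finset.sum_nbij' (fun i => i + 1) (fun k => k - 1) ?_ ?_ ?_ ?_ ?_
  · intro i hi; simp at hi ⊢; omega
  · intro k hk; simp at hk ⊢; omega
  · intro i hi; simp at hi ⊢
  · intro k hk; simp at hk ⊢; omega
  · intro i hi; simp at hi
    rw [show i + 1 - 1 = i from rfl, show n - (i + 1) = n - (i + 1) from rfl]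
end

section
/- If (a_N)_{N≥1} are positive integers satisfying the formal power series identity Π_{k≥1}(1 − x^k)^{−a_k} = 1/(1 − qx) over Q for an integer q ≥ 1, then Σ_{d | N} (d) a_d = q^N for every N ≥ 1. -/
/-!
Apply the Euler operator `θ = X d/dX`. The logarithmic derivative `θP / P` of
`P = ∏_{k ≤ N} (1 - X^k)^{a_k}` is `-∑_k k a_k X^k / (1 - X^k)`, whose coefficient of `X^N` is
`-∑_{d ∣ N} d a_d`. The hypothesis says `P ≡ 1 - qX` modulo `X^{N+1}`, and `θ` preserves this
congruence, so modulo `X^{N+1}` that logarithmic derivative is also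
`θ(1 - qX) / (1 - qX) = -qX / (1 - qX) = -∑_{n ≥ 1} qⁿ Xⁿ`.
-/

open PowerSeries Finset

theorem Derivation.apply_prod_of_apply_eq_mul {R A ι : Type*} [CommSemiring R] [CommSemiring A]
    [Algebra R A] (D : Derivation R A A) (s : Finset ι) {f g : ι → A}
    (h : ∀ i ∈ s, D (f i) = g i * f i) : D (∏ i ∈ s, f i) = (∑ i ∈ s, g i) * ∏ i ∈ s, f i := by
  classical
  induction s using Finset.induction_on with
  | empty => simp
  | insert j s hj ih =>
    rw [prod_insert hj, sum_insert hj, Derivation.leibniz, smul_eq_mul, smul_eq_mul,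
      ih fun i hi => h i (mem_insert_of_mem hi), h j (mem_insert_self j s)]
    ring

namespace PowerSeries

variable {R : Type*} [CommRing R]

variable (R) in
noncomputable def eulerDeriv : Derivation R R⟦X⟧ R⟦X⟧ := (X : R⟦X⟧) • d⁄dX R

theorem eulerDeriv_apply (f : R⟦X⟧) : eulerDeriv R f = X * d⁄dX R f := rfl

theorem coeff_eulerDeriv (f : R⟦X⟧) (n : ℕ) : coeff n (eulerDeriv R f) = n * coeff n f := by
  rw [eulerDeriv_apply]
  cases n with
  | zero => simp
  | succ n => rw [coeff_succ_X_mul, coeff_derivative, mul_comm, Nat.cast_succ]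

theorem X_pow_dvd_eulerDeriv {n : ℕ} {f : R⟦X⟧} (h : X ^ n ∣ f) : X ^ n ∣ eulerDeriv R f :=
  X_pow_dvd_iff.2 fun m hm => by rw [coeff_eulerDeriv, X_pow_dvd_iff.1 h m hm, mul_zero]

theorem eulerDeriv_X_pow {k : ℕ} (hk : k ≠ 0) : eulerDeriv R (X ^ k) = (k : R⟦X⟧) * X ^ k := by
  obtain ⟨j, rfl⟩ := Nat.exists_eq_succ_of_ne_zero hk
  rw [eulerDeriv_apply, Derivation.leibniz_pow, derivative_X, Nat.succ_sub_one, nsmul_eq_mul,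
    smul_eq_mul, mul_one, pow_succ]
  ring

theorem eulerDeriv_one_sub_C_mul_X (q : R) : eulerDeriv R (1 - C q * X) = -(C q * X) := by
  rw [eulerDeriv_apply, map_sub, Derivation.map_one_eq_zero, Derivation.leibniz, derivative_X,
    derivative_C, smul_eq_mul, smul_eq_mul]
  ring

variable (R) in
/-- `∑_{j ≥ 1} X^{jk} = X^k / (1 - X^k)`; the condition `k ∈ n.divisors` excludes `n = 0`. -/
noncomputable def multiplesSeries (k : ℕ) : R⟦X⟧ := mk fun n => if k ∈ n.divisors then 1 else 0

theorem one_sub_X_pow_mul_multiplesSeries {k : ℕ} (hk : k ≠ 0) :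
    (1 - X ^ k) * multiplesSeries R k = X ^ k := by
  ext n
  rw [sub_mul, one_mul, map_sub, coeff_X_pow_mul', coeff_X_pow]
  rcases lt_or_ge n k with hn | hn
  · have hkn : k ∉ n.divisors := fun hd => hn.not_ge (Nat.divisor_le hd)
    simp [multiplesSeries, -Nat.mem_divisors, hkn, hn.ne, hn.not_ge]
  · obtain ⟨j, rfl⟩ := Nat.exists_eq_add_of_le hn
    by_cases hj : j = 0 <;> simp [multiplesSeries, Nat.dvd_add_right (dvd_refl k), hk, hj]

theorem eulerDeriv_one_sub_X_pow_pow {k : ℕ} (hk : k ≠ 0) (m : ℕ) :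
    eulerDeriv R ((1 - X ^ k) ^ m) = -((k * m) • multiplesSeries R k) * (1 - X ^ k) ^ m := by
  cases m with
  | zero => simp
  | succ m =>
    rw [Derivation.leibniz_pow, map_sub, Derivation.map_one_eq_zero, eulerDeriv_X_pow hk]
    simp only [nsmul_eq_mul, smul_eq_mul, Nat.add_sub_cancel, Nat.cast_mul, Nat.cast_succ]
    linear_combination ((k : R⟦X⟧) * (m + 1) * (1 - X ^ k) ^ m) *
      one_sub_X_pow_mul_multiplesSeries (R := R) hk

theorem eulerDeriv_prod_one_sub_X_pow_pow {s : Finset ℕ} (hs : 0 ∉ s) (a : ℕ → ℕ) :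
    eulerDeriv R (∏ k ∈ s, (1 - X ^ k) ^ a k) =
      -(∑ k ∈ s, (k * a k) • multiplesSeries R k) * ∏ k ∈ s, (1 - X ^ k) ^ a k := by
  rw [← sum_neg_distrib]
  exact (eulerDeriv R).apply_prod_of_apply_eq_mul s fun k hk =>
    eulerDeriv_one_sub_X_pow_pow (ne_of_mem_of_not_mem hk hs) (a k)

theorem coeff_sum_Icc_nsmul_multiplesSeries (c : ℕ → ℕ) (n : ℕ) :
    coeff n (∑ k ∈ Icc 1 n, c k • multiplesSeries R k) = ((∑ d ∈ n.divisors, c d : ℕ) : R) := by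
  simp only [map_sum, map_nsmul, multiplesSeries, coeff_mk, smul_ite, smul_zero, sum_ite_mem,
    nsmul_one, ← Nat.cast_sum]
  congr 2
  exact inter_eq_right.2 fun d hd => mem_Icc.2 ⟨Nat.pos_of_mem_divisors hd, Nat.divisor_le hd⟩

theorem coeff_mul_eq_of_X_pow_dvd_sub_one {n : ℕ} (f : R⟦X⟧) {g : R⟦X⟧}
    (h : X ^ (n + 1) ∣ g - 1) : coeff n (f * g) = coeff n f := by
  have := X_pow_dvd_iff.1 (dvd_mul_of_dvd_right h f) n n.lt_succ_self
  rwa [mul_sub, mul_one, map_sub, sub_eq_zero] at this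

theorem X_pow_succ_dvd_prod_one_sub_X_pow_pow_sub_one {n : ℕ} {s : Finset ℕ}
    (hs : ∀ k ∈ s, n < k) (a : ℕ → ℕ) :
    X ^ (n + 1) ∣ (∏ k ∈ s, (1 - X ^ k) ^ a k : R⟦X⟧) - 1 := by
  refine prod_induction _ (fun g => X ^ (n + 1) ∣ g - 1) (fun g g' hg hg' => ?_) (by simp)
    fun k hk => ?_
  · rw [show g * g' - 1 = g * (g' - 1) + (g - 1) by ring]
    exact dvd_add (dvd_mul_of_dvd_right hg' g) hg
  · have := sub_dvd_pow_sub_pow (1 - X ^ k : R⟦X⟧) 1 (a k)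
    rw [sub_sub_cancel_left, neg_dvd, one_pow] at this
    exact (pow_dvd_pow X (hs k hk)).trans this

theorem coeff_prod_Icc_one_sub_X_pow_pow_of_le (a : ℕ → ℕ) {n N : ℕ} (h : n ≤ N) :
    coeff n (∏ k ∈ Icc 1 N, (1 - X ^ k) ^ a k : R⟦X⟧) =
      coeff n (∏ k ∈ Icc 1 n, (1 - X ^ k) ^ a k) := by
  rw [← prod_sdiff (Icc_subset_Icc_right h), mul_comm]
  refine coeff_mul_eq_of_X_pow_dvd_sub_one _
    (X_pow_succ_dvd_prod_one_sub_X_pow_pow_sub_one (fun k hk => ?_) a)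
  simp only [mem_sdiff, mem_Icc] at hk
  omega

theorem coeff_eq_pow_of_X_pow_dvd_mul_one_sub_C_mul_X_sub {q : R} {f : R⟦X⟧} {N : ℕ}
    (hN : N ≠ 0) (h : X ^ (N + 1) ∣ f * (1 - C q * X) - C q * X) : coeff N f = q ^ N := by
  set G := rescale q (mk 1 : R⟦X⟧)
  have hG : G * (1 - C q * X) = 1 := by
    simpa only [map_mul, map_sub, map_one, rescale_X] using
      congrArg (rescale q) (mk_one_mul_one_sub_eq_one (S := R))
  obtain ⟨M, rfl⟩ := Nat.exists_eq_succ_of_ne_zero hN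
  have hcoeff := X_pow_dvd_iff.1 (dvd_mul_of_dvd_left h G) (M + 1) (by omega)
  rw [show (f * (1 - C q * X) - C q * X) * G = f - X * (C q * G) by linear_combination f * hG,
    map_sub, coeff_succ_X_mul, coeff_C_mul, coeff_rescale, sub_eq_zero] at hcoeff
  simp [hcoeff, pow_succ, mul_comm]

end PowerSeries

/-- The coefficient of `Xⁿ` in `∏_{k ≥ 1} (1 - X^k)^{a_k}` is that of the partial product over
`k ≤ n`, which is how the inverted identity `∏_{k ≥ 1} (1 - X^k)^{a_k} = 1 - qX` is stated. -/
theorem divisor_sum_of_product_identity_general (q : ℕ)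
    (a : ℕ → ℕ)
    (hprod : ∀ n : ℕ,
      PowerSeries.coeff (R := ℚ) n
          (∏ k ∈ Finset.Icc 1 n, (1 - PowerSeries.X ^ k) ^ (a k))
        = PowerSeries.coeff (R := ℚ) n
            (1 - PowerSeries.C (R := ℚ) (q : ℚ) * PowerSeries.X)) :
    ∀ N : ℕ, 1 ≤ N → ∑ d ∈ N.divisors, d * a d = q ^ N := by
  intro N hN
  set P : ℚ⟦X⟧ := ∏ k ∈ Icc 1 N, (1 - X ^ k) ^ a k
  set S : ℚ⟦X⟧ := ∑ k ∈ Icc 1 N, (k * a k) • multiplesSeries ℚ k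
  have hP : X ^ (N + 1) ∣ P - (1 - C (q : ℚ) * X) := X_pow_dvd_iff.2 fun n hn => by
    rw [map_sub, coeff_prod_Icc_one_sub_X_pow_pow_of_le a (by omega), hprod, sub_self]
  have hS : X ^ (N + 1) ∣ S * (1 - C (q : ℚ) * X) - C (q : ℚ) * X := by
    have hθ := X_pow_dvd_eulerDeriv hP
    rw [map_sub, eulerDeriv_prod_one_sub_X_pow_pow (by simp) a, eulerDeriv_one_sub_C_mul_X] at hθ
    convert (dvd_neg.2 hθ).sub (dvd_mul_of_dvd_right hP S) using 1
    ring
  have hcoeff := coeff_eq_pow_of_X_pow_dvd_mul_one_sub_C_mul_X_sub (by omega) hS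
  rw [coeff_sum_Icc_nsmul_multiplesSeries] at hcoeff
  exact_mod_cast hcoeff

/-- If positive integers `(a_N)_{N≥1}` satisfy the formal power series identity
`Π_{k≥1} (1 − x^k)^{−a_k} = 1/(1 − qx)` over `ℚ` for an integer `q ≥ 1`, then
`Σ_{d|N} d·a_d = q^N` for every `N ≥ 1`.

Taking inverses, the product identity is equivalent to
`Π_{k≥1} (1 − x^k)^{a_k} = 1 − qx`; since the factor with index `k` is
`1 + O(x^k)`, the coefficient of `xⁿ` in the infinite product equals that of
the finite partial product `Π_{k=1}^{n} (1 − x^k)^{a_k}`, which is how the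
hypothesis is stated coefficient-wise below. -/
theorem divisor_sum_of_product_identity (q : ℕ) (hq : 1 ≤ q)
    (a : ℕ → ℕ) (ha : ∀ k : ℕ, 1 ≤ k → 1 ≤ a k)
    (hprod : ∀ n : ℕ,
      PowerSeries.coeff (R := ℚ) n
          (∏ k ∈ Finset.Icc 1 n, (1 - PowerSeries.X ^ k) ^ (a k))
        = PowerSeries.coeff (R := ℚ) n
            (1 - PowerSeries.C (R := ℚ) (q : ℚ) * PowerSeries.X)) :
    ∀ N : ℕ, 1 ≤ N → ∑ d ∈ N.divisors, d * a d = q ^ N :=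
  divisor_sum_of_product_identity_general q a hprod
end
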